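/- arXiv:2308.10333 — 5 statements merged into one kernel-verified Lean document; each statement's English description precedes it below -/
import Mathlib

section
/- For all real w > 0 and all positive integers n, the identity (a_n(w)·c_n(w) − b_n(w)²)/(w·a_n(w)²) = (1/(w−1)²)·(1 − (n+1)²·wⁿ/a_n(w)²) holds for w ≠ 1, where a_n(w) = ∑_{j=0}^n w^j, b_n(w) = ∑_{j=1}^n j·w^j, c_n(w) = ∑_{j=0}^n j²·w^j. -/
open Finset Real

noncomputable def aa (n : ℕ) (w : ℝ) : ℝ := ∑ j ∈ Finset.range (n+1), w ^ j
noncomputable def bb (n : ℕ) (w : ℝ) : ℝ := ∑ j ∈ Finset.range (n+1), (j : ℝ) * w ^ j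
noncomputable def cc (n : ℕ) (w : ℝ) : ℝ := ∑ j ∈ Finset.range (n+1), (j : ℝ)^2 * w ^ j

/-! Multiplying `aa`, `bb`, `cc` by `(w - 1)`, `(w - 1)^2`, `(w - 1)^3` clears the denominators of
the closed forms of the geometric series and its first two derivatives. In these closed forms
`aa * cc - bb^2` becomes a polynomial in `w` and `w^n`, and the identity is a ring computation. -/

lemma sub_one_mul_aa (n : ℕ) (w : ℝ) : (w - 1) * aa n w = w ^ (n + 1) - 1 := by
  rw [aa, mul_comm, geom_sum_mul]

lemma sub_one_sq_mul_bb (n : ℕ) (w : ℝ) :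
    (w - 1) ^ 2 * bb n w = n * w ^ (n + 2) - (n + 1) * w ^ (n + 1) + w := by
  induction n with
  | zero => simp [bb]
  | succ m ih =>
    rw [bb, sum_range_succ, ← bb, mul_add, ih]
    push_cast
    ring

lemma sub_one_pow_three_mul_cc (n : ℕ) (w : ℝ) :
    (w - 1) ^ 3 * cc n w = n ^ 2 * w ^ (n + 3) - (2 * n ^ 2 + 2 * n - 1) * w ^ (n + 2)
      + (n + 1) ^ 2 * w ^ (n + 1) - w ^ 2 - w := by
  induction n with
  | zero => simp [cc]
  | succ m ih =>
    rw [cc, sum_range_succ, ← cc, mul_add, ih]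
    push_cast
    ring

lemma aa_pos (n : ℕ) {w : ℝ} (hw : 0 < w) : 0 < aa n w :=
  sum_pos (fun j _ => pow_pos hw j) ⟨0, mem_range.mpr n.succ_pos⟩

lemma sub_one_sq_mul_aa_mul_cc_sub_bb_sq (n : ℕ) {w : ℝ} (hw1 : w ≠ 1) :
    (w - 1) ^ 2 * (aa n w * cc n w - bb n w ^ 2) = w * (aa n w ^ 2 - (n + 1) ^ 2 * w ^ n) := by
  have hsq : (w - 1) ^ 2 ≠ 0 := pow_ne_zero _ (sub_ne_zero.mpr hw1)
  have closed_forms : ((w - 1) * aa n w) * ((w - 1) ^ 3 * cc n w) - ((w - 1) ^ 2 * bb n w) ^ 2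
      = w * (((w - 1) * aa n w) ^ 2 - (n + 1) ^ 2 * w ^ n * (w - 1) ^ 2) := by
    rw [sub_one_mul_aa, sub_one_sq_mul_bb, sub_one_pow_three_mul_cc]
    ring
  apply mul_left_cancel₀ hsq
  linear_combination closed_forms

theorem stmt0_general (n : ℕ) (w : ℝ) (hw : 0 < w) (hw1 : w ≠ 1) :
    (aa n w * cc n w - (bb n w)^2) / (w * (aa n w)^2) =
      (1 / (w - 1)^2) * (1 - (n + 1 : ℝ)^2 * w ^ n / (aa n w)^2) := by
  have ha := (aa_pos n hw).ne'
  have hsub := sub_ne_zero.mpr hw1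
  field_simp
  linear_combination sub_one_sq_mul_aa_mul_cc_sub_bb_sq n hw1

theorem stmt0 (n : ℕ) (hn : 1 ≤ n) (w : ℝ) (hw : 0 < w) (hw1 : w ≠ 1) :
    (aa n w * cc n w - (bb n w)^2) / (w * (aa n w)^2) =
      (1 / (w - 1)^2) * (1 - (n + 1 : ℝ)^2 * w ^ n / (aa n w)^2) :=
  stmt0_general n w hw hw1
end

section
/- For all real w > 0 and all positive integers n, sqrt((a_n(w)·c_n(w) − b_n(w)²)/(w·a_n(w)²)) ≤ 1/|w−1| (for w ≠ 1); equivalently, a_n(w)·c_n(w) − b_n(w)² ≤ w·a_n(w)²/(w−1)². -/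
open Finset Real

lemma la (n : ℕ) (w : ℝ) : (w - 1) * aa n w = w ^ (n+1) - 1 := by
  rw [aa, mul_comm]
  exact geom_sum_mul w (n+1)

lemma lb (n : ℕ) (w : ℝ) : (w - 1) * bb n w = n * w ^ (n+1) - aa n w + 1 := by
  induction n with
  | zero => simp [aa, bb]
  | succ n ih =>
    simp only [aa, bb, Finset.sum_range_succ] at *
    push_cast at *
    linear_combination ih

lemma lc (n : ℕ) (w : ℝ) :
    (w - 1) * cc n w = (n:ℝ)^2 * w ^ (n+1) - 2 * bb n w + aa n w - 1 := by
  induction n with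
  | zero => simp [aa, bb, cc]
  | succ n ih =>
    simp only [aa, bb, cc, Finset.sum_range_succ] at *
    push_cast at *
    linear_combination ih

lemma key (n : ℕ) (w : ℝ) :
    (w - 1)^2 * (aa n w * cc n w - (bb n w)^2)
      = w * (aa n w)^2 - ((n:ℝ)+1)^2 * w ^ (n+1) := by
  have h1 := la n w
  have h2 := lb n w
  have h3 := lc n w
  linear_combination ((n:ℝ)^2 * w ^ (n+1) - 1) * h1
    - (aa n w + (w - 1) * bb n w + (n:ℝ) * w ^ (n+1) + 1) * h2
    + aa n w * (w - 1) * h3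

theorem stmt1 (n : ℕ) (hn : 1 ≤ n) (w : ℝ) (hw : 0 < w) (hw1 : w ≠ 1) :
    Real.sqrt ((aa n w * cc n w - (bb n w)^2) / (w * (aa n w)^2)) ≤ 1 / |w - 1| ∧
    aa n w * cc n w - (bb n w)^2 ≤ w * (aa n w)^2 / (w - 1)^2 := by
  have ha : 0 < aa n w := by
    apply Finset.sum_pos (fun j _ => pow_pos hw j)
    exact Finset.nonempty_range_iff.mpr (Nat.succ_ne_zero n)
  have hne : w - 1 ≠ 0 := sub_ne_zero.mpr hw1
  have hsq : (0:ℝ) < (w - 1)^2 := lt_of_le_of_ne (sq_nonneg _) (Ne.symm (pow_ne_zero 2 hne))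
  have hk := key n w
  have hx : (0:ℝ) ≤ ((n:ℝ)+1)^2 * w ^ (n+1) := by positivity
  have h2 : aa n w * cc n w - (bb n w)^2 ≤ w * (aa n w)^2 / (w - 1)^2 := by
    rw [le_div_iff₀ hsq]
    nlinarith
  refine ⟨?_, h2⟩
  have hden : (0:ℝ) < w * (aa n w)^2 := by positivity
  have hle : (aa n w * cc n w - (bb n w)^2) / (w * (aa n w)^2) ≤ ((w-1)^2)⁻¹ := by
    rw [div_le_iff₀ hden]
    calc aa n w * cc n w - bb n w ^ 2 ≤ w * aa n w ^ 2 / (w-1)^2 := h2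
      _ = ((w-1)^2)⁻¹ * (w * aa n w ^ 2) := by ring
  calc Real.sqrt ((aa n w * cc n w - (bb n w)^2) / (w * (aa n w)^2))
      ≤ Real.sqrt (((w-1)^2)⁻¹) := Real.sqrt_le_sqrt hle
    _ = (Real.sqrt ((w-1)^2))⁻¹ := Real.sqrt_inv _
    _ = |w - 1|⁻¹ := by rw [Real.sqrt_sq_eq_abs]
    _ = 1 / |w - 1| := (one_div _).symm
end

section
/- For every positive integer n, the function w ↦ c_n(w)/a_n(w) = (∑_{j=0}^n j²·w^j)/(∑_{j=0}^n w^j) is strictly increasing on (0, ∞). -/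
open Finset Real

lemma cross_le {w1 w2 : ℝ} (h1 : 0 < w1) (h12 : w1 < w2) {j k : ℕ} (h : j ≤ k) :
    w2 ^ j * w1 ^ k ≤ w1 ^ j * w2 ^ k := by
  have h2 : 0 < w2 := h1.trans h12
  have e1 : w2 ^ j * w1 ^ k = (w1 ^ j * w2 ^ j) * w1 ^ (k - j) := by
    rw [mul_comm (w1 ^ j), mul_assoc, ← pow_add]
    congr 2; omega
  have e2 : w1 ^ j * w2 ^ k = (w1 ^ j * w2 ^ j) * w2 ^ (k - j) := by
    rw [mul_assoc, ← pow_add]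
    congr 2; omega
  rw [e1, e2]
  exact mul_le_mul_of_nonneg_left (pow_le_pow_left₀ h1.le h12.le _) (by positivity)

lemma term_nonneg {w1 w2 : ℝ} (h1 : 0 < w1) (h12 : w1 < w2) (j k : ℕ) :
    0 ≤ ((j:ℝ)^2 - (k:ℝ)^2) * (w2 ^ j * w1 ^ k - w1 ^ j * w2 ^ k) := by
  rcases le_total j k with h | h
  · have hjk : (j:ℝ) ≤ k := Nat.cast_le.mpr h
    have h1' : ((j:ℝ)^2 - (k:ℝ)^2) ≤ 0 := by nlinarith [Nat.cast_nonneg (α := ℝ) j]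
    have h2' : w2 ^ j * w1 ^ k - w1 ^ j * w2 ^ k ≤ 0 := by
      linarith [cross_le h1 h12 h]
    nlinarith [h1', h2']
  · have hjk : (k:ℝ) ≤ j := Nat.cast_le.mpr h
    have h1' : 0 ≤ ((j:ℝ)^2 - (k:ℝ)^2) := by nlinarith [Nat.cast_nonneg (α := ℝ) k]
    have h2' : 0 ≤ w2 ^ j * w1 ^ k - w1 ^ j * w2 ^ k := by
      linarith [cross_le h1 h12 h]
    exact mul_nonneg h1' h2'

theorem stmt3 (n : ℕ) (hn : 1 ≤ n) :
    StrictMonoOn (fun w => cc n w / aa n w) (Set.Ioi (0 : ℝ)) := by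
  intro w1 hw1 w2 hw2 h12
  simp only [Set.mem_Ioi] at hw1 hw2
  have ha1 : 0 < aa n w1 :=
    Finset.sum_pos (fun i _ => pow_pos hw1 i) ⟨0, by simp⟩
  have ha2 : 0 < aa n w2 :=
    Finset.sum_pos (fun i _ => pow_pos hw2 i) ⟨0, by simp⟩
  simp only
  rw [div_lt_div_iff₀ ha1 ha2]
  have e : ∀ u v : ℝ,
      (∑ j ∈ Finset.range (n+1), ∑ k ∈ Finset.range (n+1), (j:ℝ)^2 * (u ^ j * v ^ k))
        = cc n u * aa n v := by
    intro u v
    rw [cc, aa, Finset.sum_mul_sum]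
    exact Finset.sum_congr rfl fun j _ => Finset.sum_congr rfl fun k _ => by ring
  have e' : ∀ u v : ℝ,
      (∑ j ∈ Finset.range (n+1), ∑ k ∈ Finset.range (n+1), (k:ℝ)^2 * (u ^ j * v ^ k))
        = cc n v * aa n u := by
    intro u v
    rw [Finset.sum_comm, cc, aa, Finset.sum_mul_sum]
    exact Finset.sum_congr rfl fun k _ => Finset.sum_congr rfl fun j _ => by ring
  have key : 0 < ∑ j ∈ Finset.range (n+1), ∑ k ∈ Finset.range (n+1),
      ((j:ℝ)^2 - (k:ℝ)^2) * (w2 ^ j * w1 ^ k - w1 ^ j * w2 ^ k) := by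
    rw [← Finset.sum_product']
    apply Finset.sum_pos'
    · intro p _
      exact term_nonneg hw1 h12 p.1 p.2
    · refine ⟨(1, 0), ?_, ?_⟩
      · simp [Finset.mem_product]
        omega
      · simp only [Nat.cast_one, Nat.cast_zero, one_pow, pow_zero, pow_one, mul_one, one_mul]
        nlinarith
  have expand : (∑ j ∈ Finset.range (n+1), ∑ k ∈ Finset.range (n+1),
        ((j:ℝ)^2 - (k:ℝ)^2) * (w2 ^ j * w1 ^ k - w1 ^ j * w2 ^ k))
      = 2 * (cc n w2 * aa n w1 - cc n w1 * aa n w2) := by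
    have split : ∀ (j k : ℕ),
        ((j:ℝ)^2 - (k:ℝ)^2) * (w2 ^ j * w1 ^ k - w1 ^ j * w2 ^ k)
        = ((j:ℝ)^2 * (w2 ^ j * w1 ^ k) - (j:ℝ)^2 * (w1 ^ j * w2 ^ k))
          - ((k:ℝ)^2 * (w2 ^ j * w1 ^ k) - (k:ℝ)^2 * (w1 ^ j * w2 ^ k)) := by
      intro j k; ring
    simp only [split, Finset.sum_sub_distrib]
    rw [e w2 w1, e w1 w2, e' w2 w1, e' w1 w2]
    ring
  linarith
end

section
/- For sufficiently large n, if 0 ≤ w ≤ 1 − (log n)/n then c_n(w)/a_n(w) ≤ 4·n²/(log n)², where a_n(w) = ∑_{j=0}^n w^j and c_n(w) = ∑_{j=0}^n j²·w^j. -/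
open Finset Real

lemma hb_id (n : ℕ) (w : ℝ) :
    (1 - w) * bb n w = (aa n w - 1) - (n : ℝ) * w ^ (n+1) := by
  induction n with
  | zero => simp [aa, bb]
  | succ m ih =>
    have ha : aa (m+1) w = aa m w + w ^ (m+1) := by
      simp [aa, Finset.sum_range_succ]
    have hb : bb (m+1) w = bb m w + ((m:ℝ)+1) * w ^ (m+1) := by
      simp [bb, Finset.sum_range_succ]
    rw [ha, hb, pow_succ w (m+1)]
    push_cast
    linear_combination ih

lemma hc_id (n : ℕ) (w : ℝ) :
    (1 - w) * cc n w = 2 * bb n w - (aa n w - 1) - (n : ℝ)^2 * w ^ (n+1) := by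
  induction n with
  | zero => simp [aa, bb, cc]
  | succ m ih =>
    have ha : aa (m+1) w = aa m w + w ^ (m+1) := by
      simp [aa, Finset.sum_range_succ]
    have hb : bb (m+1) w = bb m w + ((m:ℝ)+1) * w ^ (m+1) := by
      simp [bb, Finset.sum_range_succ]
    have hc : cc (m+1) w = cc m w + ((m:ℝ)+1)^2 * w ^ (m+1) := by
      simp [cc, Finset.sum_range_succ]
    rw [ha, hb, hc, pow_succ w (m+1)]
    push_cast
    linear_combination ih

theorem stmt6 : ∃ N : ℕ, ∀ n : ℕ, N ≤ n → ∀ w : ℝ, 0 ≤ w → w ≤ 1 - Real.log n / n →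
    cc n w / aa n w ≤ 4 * (n : ℝ)^2 / (Real.log n)^2 := by
  use 3
  intro n hn w hw hw2
  have hn0 : (0:ℝ) < n := by positivity
  have hL : (1:ℝ) ≤ Real.log n := by
    have : Real.exp 1 ≤ n := by
      have : Real.exp 1 < 3 := by
        have := Real.exp_one_lt_d9
        linarith
      have : (3:ℝ) ≤ n := by exact_mod_cast hn
      linarith [Real.exp_one_lt_d9]
    calc (1:ℝ) = Real.log (Real.exp 1) := by simp
    _ ≤ Real.log n := Real.log_le_log (Real.exp_pos 1) this
  have hL0 : (0:ℝ) < Real.log n := by linarith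
  have ht : (0:ℝ) < Real.log n / n := by positivity
  have h1w : Real.log n / n ≤ 1 - w := by linarith
  have h1w0 : (0:ℝ) < 1 - w := lt_of_lt_of_le ht h1w
  -- nonnegativity / positivity facts
  have haa : (1:ℝ) ≤ aa n w := by
    have h0 : (0:ℕ) ∈ Finset.range (n+1) := by simp
    have := Finset.single_le_sum (f := fun j => w ^ j)
      (fun i _ => pow_nonneg hw i) h0
    simpa [aa] using this
  have haa0 : (0:ℝ) < aa n w := by linarith
  have hbb0 : (0:ℝ) ≤ bb n w := by
    apply Finset.sum_nonneg; intro i _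
    positivity
  have hcc0 : (0:ℝ) ≤ cc n w := by
    apply Finset.sum_nonneg; intro i _
    positivity
  have hpow : (0:ℝ) ≤ (n:ℝ) * w ^ (n+1) := by positivity
  have hpow2 : (0:ℝ) ≤ (n:ℝ)^2 * w ^ (n+1) := by positivity
  -- (1-w) bb ≤ aa, (1-w) cc ≤ 2 bb
  have hbb_le : (1 - w) * bb n w ≤ aa n w := by
    have := hb_id n w; linarith
  have hcc_le : (1 - w) * cc n w ≤ 2 * bb n w := by
    have := hc_id n w; linarith
  have key : (1 - w)^2 * cc n w ≤ 2 * aa n w := by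
    have h1 : (1 - w) * ((1 - w) * cc n w) ≤ (1 - w) * (2 * bb n w) :=
      mul_le_mul_of_nonneg_left hcc_le (le_of_lt h1w0)
    nlinarith [hbb_le]
  -- conclude
  rw [div_le_div_iff₀ haa0 (by positivity : (0:ℝ) < (Real.log n)^2)]
  have hsq : (Real.log n / n)^2 ≤ (1 - w)^2 := by
    apply pow_le_pow_left₀ (le_of_lt ht) h1w
  have h2 : (Real.log n / n)^2 * cc n w ≤ 2 * aa n w := by
    calc (Real.log n / n)^2 * cc n w ≤ (1 - w)^2 * cc n w :=
          mul_le_mul_of_nonneg_right hsq hcc0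
    _ ≤ 2 * aa n w := key
  have hexp : (Real.log n / n)^2 = (Real.log n)^2 / (n:ℝ)^2 := by
    rw [div_pow]
  rw [hexp] at h2
  have hn2 : (0:ℝ) < (n:ℝ)^2 := by positivity
  have h3 : (Real.log n)^2 * cc n w ≤ 2 * (n:ℝ)^2 * aa n w := by
    have := mul_le_mul_of_nonneg_left h2 (le_of_lt hn2)
    field_simp at this
    nlinarith [this]
  nlinarith [h3, haa0, hn2]
end

section
/- With F_n(w) = (1/(2√w))·sqrt(c_n(w)/a_n(w))·sqrt((a_n(w)·c_n(w) − b_n(w)²)/(w·a_n(w)²)), one has ∫_0^{1 − (log n)/n} F_n(w) dw ≤ (2 + √2)·n for all sufficiently large n. -/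
open Finset Real

noncomputable def F (n : ℕ) (w : ℝ) : ℝ :=
  (1 / (2 * Real.sqrt w)) * Real.sqrt (cc n w / aa n w) *
    Real.sqrt ((aa n w * cc n w - (bb n w)^2) / (w * (aa n w)^2))


/-!
Dropping `b_n²` (so the variance `(a_n c_n - b_n²)/a_n²` is bounded by the second moment
`c_n/a_n`) gives `F_n(w) ≤ c_n / (2 w a_n)`. The closed forms `(1 - w)³ c_n ≤ w (1 + w)` and
`(1 - w) a_n = 1 - w^(n+1)`, together with `w^n ≤ 1/n` for `w ≤ 1 - (log n)/n`, then give
`F_n(w) ≤ 2/(1 - w)²` on the whole range, whose integral is at most `2n / log n`.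
-/

open MeasureTheory

lemma one_sub_pow_three_mul_cc (n : ℕ) (w : ℝ) :
    (1 - w) ^ 3 * cc n w = w * (1 + w) - w ^ (n + 1) * ((n + 1 - n * w) ^ 2 + w) := by
  induction n with
  | zero => simp [cc]
  | succ n ih =>
    rw [cc, sum_range_succ, mul_add, ← cc, ih]
    push_cast
    ring

lemma cc_le (n : ℕ) {w : ℝ} (hw₀ : 0 ≤ w) (hw₁ : w < 1) :
    cc n w ≤ w * (1 + w) / (1 - w) ^ 3 := by
  rw [le_div_iff₀ (pow_pos (sub_pos.2 hw₁) 3), mul_comm, one_sub_pow_three_mul_cc]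
  have : 0 ≤ w ^ (n + 1) * ((n + 1 - n * w) ^ 2 + w) := by positivity
  linarith

lemma cc_nonneg (n : ℕ) {w : ℝ} (hw : 0 ≤ w) : 0 ≤ cc n w :=
  sum_nonneg fun _ _ => by positivity

lemma aa_mul_one_sub (n : ℕ) (w : ℝ) : aa n w * (1 - w) = 1 - w ^ (n + 1) :=
  geom_sum_mul_neg w (n + 1)

lemma one_le_aa (n : ℕ) {w : ℝ} (hw : 0 ≤ w) : 1 ≤ aa n w := by
  simpa [aa] using single_le_sum (f := (w ^ ·)) (fun j _ => pow_nonneg hw j)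
    (mem_range.2 n.succ_pos)

lemma F_nonneg (n : ℕ) (w : ℝ) : 0 ≤ F n w := by
  have : 0 ≤ 1 / (2 * √w) := by positivity
  unfold F
  positivity

lemma sqrt_mul_sqrt_variance_le {a b c w : ℝ} (ha : 0 < a) (hc : 0 ≤ c) (hw : 0 < w) :
    1 / (2 * √w) * √(c / a) * √((a * c - b ^ 2) / (w * a ^ 2)) ≤ c / (2 * w * a) := by
  have hvar : (a * c - b ^ 2) / (w * a ^ 2) ≤ (c / a) / w := by
    rw [div_div, div_le_div_iff₀ (by positivity) (by positivity)]
    nlinarith [sq_nonneg b, mul_pos ha hw]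
  calc 1 / (2 * √w) * √(c / a) * √((a * c - b ^ 2) / (w * a ^ 2))
      ≤ 1 / (2 * √w) * √(c / a) * √((c / a) / w) := by gcongr
    _ = c / (2 * w * a) := by
      rw [sqrt_div' _ hw.le, mul_assoc, ← mul_div_assoc, mul_self_sqrt (by positivity)]
      field_simp
      rw [sq_sqrt hw.le]
      ring

lemma F_le (n : ℕ) {w : ℝ} (hw : 0 < w) : F n w ≤ cc n w / (2 * w * aa n w) :=
  sqrt_mul_sqrt_variance_le (by linarith [one_le_aa n hw.le]) (cc_nonneg n hw.le) hw

lemma F_le_two_div_one_sub_sq (n : ℕ) {w : ℝ} (hw₀ : 0 < w) (hw₁ : w < 1)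
    (hpow : w ^ (n + 1) ≤ 1 / 2) : F n w ≤ 2 / (1 - w) ^ 2 := by
  have h₁ : 0 < 1 - w := by linarith
  have ha : w / (1 - w) ≤ 2 * w * aa n w := by
    rw [div_le_iff₀ h₁, mul_assoc, aa_mul_one_sub]
    nlinarith
  calc F n w ≤ cc n w / (2 * w * aa n w) := F_le n hw₀
    _ ≤ (w * (1 + w) / (1 - w) ^ 3) / (w / (1 - w)) := by
      gcongr
      exact cc_le n hw₀.le hw₁
    _ = (1 + w) / (1 - w) ^ 2 := by field_simp
    _ ≤ 2 / (1 - w) ^ 2 := by gcongr; linarith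

lemma intervalIntegrable_div_one_sub_sq (c : ℝ) {a b : ℝ} (hab : a ≤ b) (hb : b < 1) :
    IntervalIntegrable (fun w => c / (1 - w) ^ 2) volume a b := by
  refine ContinuousOn.intervalIntegrable <| continuousOn_const.div (by fun_prop) fun x hx => ?_
  rw [Set.uIcc_of_le hab] at hx
  nlinarith [hx.2]

lemma integral_div_one_sub_sq (c : ℝ) {a b : ℝ} (hab : a ≤ b) (hb : b < 1) :
    ∫ w in a..b, c / (1 - w) ^ 2 = c / (1 - b) - c / (1 - a) := by
  refine intervalIntegral.integral_eq_sub_of_hasDerivAt (f := fun w => c / (1 - w))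
    (fun x hx => ?_) (intervalIntegrable_div_one_sub_sq c hab hb)
  rw [Set.uIcc_of_le hab] at hx
  have hx' : 1 - x ≠ 0 := by linarith [hx.2]
  simpa using (hasDerivAt_const x c).fun_div ((hasDerivAt_id x).const_sub 1) hx'

lemma pow_le_one_div_of_le_one_sub_log_div {n : ℕ} (hn : 0 < n) {w : ℝ} (hw₀ : 0 ≤ w)
    (hw : w ≤ 1 - log n / n) : w ^ n ≤ 1 / n := by
  have hn' : (0 : ℝ) < n := by exact_mod_cast hn
  calc w ^ n ≤ (1 - log n / n) ^ n := by gcongr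
    _ ≤ exp (-log n) := one_sub_div_pow_le_exp_neg (log_le_self hn'.le)
    _ = 1 / n := by rw [exp_neg, exp_log hn', one_div]

lemma F_le_of_mem_Ioc {n : ℕ} (hn : 2 ≤ n) {w : ℝ} (hw : w ∈ Set.Ioc 0 (1 - log n / n)) :
    F n w ≤ 2 / (1 - w) ^ 2 := by
  have hn' : (2 : ℝ) ≤ n := by exact_mod_cast hn
  have hL : 0 < log n / n := div_pos (log_pos (by linarith)) (by linarith)
  refine F_le_two_div_one_sub_sq n hw.1 (by linarith [hw.2]) ?_
  calc w ^ (n + 1) ≤ w ^ n := pow_le_pow_of_le_one hw.1.le (by linarith [hw.2]) n.le_succ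
    _ ≤ 1 / n := pow_le_one_div_of_le_one_sub_log_div (by omega) hw.1.le hw.2
    _ ≤ 1 / 2 := by gcongr

lemma integral_F_le {n : ℕ} (hn : 2 ≤ n) :
    ∫ w in (0 : ℝ)..(1 - log n / n), F n w ≤ 2 * n / log n - 2 := by
  have hn' : (2 : ℝ) ≤ n := by exact_mod_cast hn
  have hlog : 0 < log n := log_pos (by linarith)
  have hL₀ : 0 < log n / n := div_pos hlog (by linarith)
  have hL₁ : log n / n ≤ 1 := (div_le_one (by linarith)).2 (log_le_self (by linarith))
  have hb₀ : (0 : ℝ) ≤ 1 - log n / n := by linarith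
  have hb₁ : 1 - log n / n < 1 := by linarith
  calc ∫ w in (0 : ℝ)..(1 - log n / n), F n w
      = ∫ w in Set.Ioc 0 (1 - log n / n), F n w := intervalIntegral.integral_of_le hb₀
    _ ≤ ∫ w in Set.Ioc 0 (1 - log n / n), 2 / (1 - w) ^ 2 := by
      refine integral_mono_of_nonneg (.of_forall (F_nonneg n))
        ((intervalIntegrable_iff_integrableOn_Ioc_of_le hb₀).1
          (intervalIntegrable_div_one_sub_sq 2 hb₀ hb₁))
        (ae_restrict_of_forall_mem measurableSet_Ioc fun w hw => F_le_of_mem_Ioc hn hw)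
    _ = 2 * n / log n - 2 := by
      rw [← intervalIntegral.integral_of_le hb₀, integral_div_one_sub_sq 2 hb₀ hb₁,
        sub_sub_cancel, sub_zero, div_one, div_div_eq_mul_div]

theorem stmt11 : ∃ N : ℕ, ∀ n : ℕ, N ≤ n →
    ∫ w in (0 : ℝ)..(1 - Real.log n / n), F n w ≤ (2 + Real.sqrt 2) * n := by
  refine ⟨3, fun n hn => (integral_F_le (by omega)).trans ?_⟩
  have hn' : (3 : ℝ) ≤ n := by exact_mod_cast hn
  have hlog : 1 ≤ log n := by
    rw [le_log_iff_exp_le (by linarith)]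
    linarith [exp_one_lt_d9]
  have : 2 * n / log n ≤ 2 * n := div_le_self (by linarith) hlog
  nlinarith [sqrt_nonneg 2]
end
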